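/- arXiv:2105.04851 — 4 statements merged into one kernel-verified Lean document; each statement's English description precedes it below -/
import Mathlib

section
/- For all natural numbers $a, k$ with $1 < a < k$ and all real $\gamma$ with $1 < \gamma < a/2$, the product $\prod_{t=a}^{k-1}(1 - \gamma/t)$ satisfies $a^{2\gamma}/k^{2\gamma} \le \prod_{t=a}^{k-1}(1-\gamma/t) \le a^{\gamma}/k^{\gamma}$. -/
open Finset

/-
Write `1 - γ/t` against the telescoping factor `t/(t+1)`, whose product over `[a, k)` is `a/k`.
Bernoulli's inequality gives `1 - γ/t ≤ 1 - γ/(t+1) ≤ (t/(t+1))^γ` for `γ ≥ 1`, and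
`(t/(t+1))^(2γ) = (1 + 1/t)^(-2γ) ≤ (1 + 2γ/t)⁻¹ ≤ 1 - γ/t` as soon as `2γ ≤ t`.
Multiplying these pointwise bounds over `t ∈ [a, k)` gives the two inequalities.
-/

theorem prod_Ico_div_add_one {a : ℕ} (ha : 0 < a) {k : ℕ} (hak : a ≤ k) :
    ∏ t ∈ Ico a k, ((t : ℝ) / (t + 1)) = a / k := by
  induction k, hak using Nat.le_induction with
  | base => simp [(Nat.cast_pos.mpr ha).ne']
  | succ k hak ih =>
    have hk : (0 : ℝ) < k := by exact_mod_cast ha.trans_le hak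
    rw [prod_Ico_succ_top hak, ih]
    push_cast
    field_simp

theorem prod_Ico_div_add_one_rpow {a : ℕ} (ha : 0 < a) {k : ℕ} (hak : a ≤ k) (p : ℝ) :
    ∏ t ∈ Ico a k, ((t : ℝ) / (t + 1)) ^ p = (a : ℝ) ^ p / (k : ℝ) ^ p := by
  rw [Real.finsetProd_rpow _ _ (fun t _ => by positivity), prod_Ico_div_add_one ha hak,
    Real.div_rpow (by positivity) (by positivity)]

theorem one_sub_div_le_div_add_one_rpow {x γ : ℝ} (hx : 0 < x) (hγ : 1 ≤ γ) :
    1 - γ / x ≤ (x / (x + 1)) ^ γ := by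
  have bernoulli : 1 + γ * (-(1 / (x + 1))) ≤ (1 + -(1 / (x + 1))) ^ γ :=
    one_add_mul_self_le_rpow_one_add
      (neg_le_neg ((div_le_one (by linarith)).mpr (by linarith))) hγ
  have hbase : 1 + -(1 / (x + 1)) = x / (x + 1) := by field_simp; ring
  have hshift : γ / (x + 1) ≤ γ / x := div_le_div_of_nonneg_left (by linarith) hx (by linarith)
  calc 1 - γ / x ≤ 1 + γ * (-(1 / (x + 1))) := by rw [mul_neg, mul_one_div]; linarith
    _ ≤ (x / (x + 1)) ^ γ := hbase ▸ bernoulli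

theorem div_add_one_rpow_two_mul_le_one_sub_div {x γ : ℝ} (hγ : 1 / 2 ≤ γ) (hγx : 2 * γ ≤ x) :
    (x / (x + 1)) ^ (2 * γ) ≤ 1 - γ / x := by
  have hx : 0 < x := by linarith
  have bernoulli : 1 + 2 * γ * (1 / x) ≤ (1 + 1 / x) ^ (2 * γ) :=
    one_add_mul_self_le_rpow_one_add (by linarith [one_div_pos.mpr hx]) (by linarith)
  have hinv : (x / (x + 1)) ^ (2 * γ) = ((1 + 1 / x) ^ (2 * γ))⁻¹ := by
    rw [← Real.inv_rpow (by positivity)]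
    congr 1
    field_simp
  have hprod : 1 ≤ (1 - γ / x) * (1 + 2 * γ * (1 / x)) := by
    have key : (1 - γ / x) * (1 + 2 * γ * (1 / x)) = 1 + γ * (x - 2 * γ) / x ^ 2 := by
      field_simp; ring
    rw [key]
    have : 0 ≤ γ * (x - 2 * γ) / x ^ 2 := by
      exact div_nonneg (mul_nonneg (by linarith) (by linarith)) (sq_nonneg x)
    linarith
  rw [hinv]
  calc ((1 + 1 / x) ^ (2 * γ))⁻¹ ≤ (1 + 2 * γ * (1 / x))⁻¹ := inv_anti₀ (by positivity) bernoulli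
    _ ≤ 1 - γ / x := (inv_le_iff_one_le_mul₀ (by positivity)).mpr hprod

theorem stmt_1_general (a k : ℕ) (γ : ℝ) (hak : a < k)
    (hγ1 : 1 < γ) (hγ2 : γ < (a : ℝ) / 2) :
    (a : ℝ) ^ (2 * γ) / (k : ℝ) ^ (2 * γ) ≤ (∏ t ∈ Finset.Ico a k, (1 - γ / (t : ℝ))) ∧
    (∏ t ∈ Finset.Ico a k, (1 - γ / (t : ℝ))) ≤ (a : ℝ) ^ γ / (k : ℝ) ^ γ := by
  have ha : 0 < a := by
    have : (0 : ℝ) < a := by linarith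
    exact_mod_cast this
  have hlarge : ∀ t ∈ Ico a k, 2 * γ ≤ (t : ℝ) := fun t ht => by
    have : (a : ℝ) ≤ t := by exact_mod_cast (mem_Ico.mp ht).1
    linarith
  constructor
  · rw [← prod_Ico_div_add_one_rpow ha hak.le]
    exact prod_le_prod (fun t _ => by positivity)
      (fun t ht => div_add_one_rpow_two_mul_le_one_sub_div (by linarith) (hlarge t ht))
  · rw [← prod_Ico_div_add_one_rpow ha hak.le]
    refine prod_le_prod (fun t ht => ?_)
      (fun t ht => one_sub_div_le_div_add_one_rpow (by linarith [hlarge t ht]) hγ1.le)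
    have ht := hlarge t ht
    rw [sub_nonneg, div_le_one (by linarith)]
    linarith

/-- For naturals `1 < a < k` and real `1 < γ < a/2`,
`a^(2γ)/k^(2γ) ≤ ∏_{t=a}^{k-1} (1 - γ/t) ≤ a^γ/k^γ`. -/
theorem stmt_1 (a k : ℕ) (γ : ℝ) (ha : 1 < a) (hak : a < k)
    (hγ1 : 1 < γ) (hγ2 : γ < (a : ℝ) / 2) :
    (a : ℝ) ^ (2 * γ) / (k : ℝ) ^ (2 * γ) ≤ (∏ t ∈ Finset.Ico a k, (1 - γ / (t : ℝ))) ∧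
    (∏ t ∈ Finset.Ico a k, (1 - γ / (t : ℝ))) ≤ (a : ℝ) ^ γ / (k : ℝ) ^ γ :=
  stmt_1_general a k γ hak hγ1 hγ2
end

section
/- Let $(M_k)_{k\ge 0}$ be a nonnegative real sequence satisfying $M_{k+1} \le \left(1 - \tfrac{c}{k+m}\right) M_k + \tfrac{p_2}{(k+m)^2} + \tfrac{p_3}{(k+m)^3} + \tfrac{p_5}{(k+m)^5}$ for all $k \ge 0$, where $c > 4$, $m > c$, and $p_2, p_3, p_5 \ge 0$. Then for all $k \ge 1$, $M_k \le \frac{m^2 M_0}{(k+m)^2} + \frac{4 p_2}{(c-1)(k+m)} + \frac{4 p_3}{(c-2)(k+m)^2} + \frac{4 p_5}{(c-4)(k+m)^4}$. (This is the key Lyapunov recursion bound with $c = 4\theta/3$.) -/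
/-!
The right-hand side, read as a function `B` of `n = k + m`, is a supersolution of the
recursion: `(1 - c/n) B(n) + p₂/n² + p₃/n³ + p₅/n⁵ ≤ B(n + 1)`, and `B(m) ≥ M₀`, so
`M_k ≤ B(k + m)` by induction. The supersolution property holds term by term: for
`C ≥ 0` and `p ≤ (c - d) C`, Bernoulli's inequality `(n/(n+1))^d ≥ 1 - d/(n+1) ≥ 1 - d/n` gives
`(1 - c/n) C/n^d + p/n^(d+1) ≤ (1 - d/n) C/n^d ≤ C/(n+1)^d`.
-/

lemma one_sub_div_le_div_add_one_pow (d : ℕ) {n : ℝ} (hn : 0 < n) :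
    1 - d / n ≤ (n / (n + 1)) ^ d := by
  have hbern := one_add_mul_le_pow (a := -1 / (n + 1)) (by
    rw [neg_div, neg_le_neg_iff, div_le_iff₀ (by linarith)]; linarith) d
  have hd : (d : ℝ) / (n + 1) ≤ d / n :=
    div_le_div_of_nonneg_left d.cast_nonneg hn (by linarith)
  have hneg : (d : ℝ) * (-1 / (n + 1)) = -(d / (n + 1)) := by ring
  calc 1 - d / n ≤ 1 + d * (-1 / (n + 1)) := by rw [hneg]; linarith
    _ ≤ (1 + -1 / (n + 1)) ^ d := hbern
    _ = (n / (n + 1)) ^ d := by congr 1; field_simp; ring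

lemma one_sub_div_mul_add_div_pow_succ_le {c n C p : ℝ} (d : ℕ) (hn : 0 < n) (hC : 0 ≤ C)
    (hp : p ≤ (c - d) * C) :
    (1 - c / n) * (C / n ^ d) + p / n ^ (d + 1) ≤ C / (n + 1) ^ d :=
  calc (1 - c / n) * (C / n ^ d) + p / n ^ (d + 1)
      ≤ (1 - c / n) * (C / n ^ d) + (c - d) * C / n ^ (d + 1) := by gcongr
    _ = (1 - d / n) * (C / n ^ d) := by field_simp; ring
    _ ≤ (n / (n + 1)) ^ d * (C / n ^ d) := by
      gcongr; exact one_sub_div_le_div_add_one_pow d hn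
    _ = C / (n + 1) ^ d := by rw [div_pow]; field_simp

lemma le_of_le_mul_add_of_mul_add_le {a e M B : ℕ → ℝ} (ha : ∀ k, 0 ≤ a k)
    (hM : ∀ k, M (k + 1) ≤ a k * M k + e k) (hB : ∀ k, a k * B k + e k ≤ B (k + 1))
    (h0 : M 0 ≤ B 0) : ∀ k, M k ≤ B k
  | 0 => h0
  | k + 1 => (hM k).trans <| le_trans (by
      gcongr; exacts [ha k, le_of_le_mul_add_of_mul_add_le ha hM hB h0 k]) (hB k)

noncomputable def lyapunovBound (c A p2 p3 p5 n : ℝ) : ℝ :=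
  A / n ^ 2 + 4 * p2 / ((c - 1) * n) + 4 * p3 / ((c - 2) * n ^ 2) + 4 * p5 / ((c - 4) * n ^ 4)

section lyapunovBound

variable {c A p2 p3 p5 n : ℝ}

lemma div_sq_le_lyapunovBound (hc : 4 < c) (hn : 0 < n)
    (hp2 : 0 ≤ p2) (hp3 : 0 ≤ p3) (hp5 : 0 ≤ p5) : A / n ^ 2 ≤ lyapunovBound c A p2 p3 p5 n := by
  have : 0 < c - 1 := by linarith
  have : 0 < c - 2 := by linarith
  have : 0 < c - 4 := by linarith
  unfold lyapunovBound
  have : 0 ≤ 4 * p2 / ((c - 1) * n) := by positivity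
  have : 0 ≤ 4 * p3 / ((c - 2) * n ^ 2) := by positivity
  have : 0 ≤ 4 * p5 / ((c - 4) * n ^ 4) := by positivity
  linarith

lemma lyapunovBound_step (hc : 4 < c) (hn : 0 < n)
    (hA : 0 ≤ A) (hp2 : 0 ≤ p2) (hp3 : 0 ≤ p3) (hp5 : 0 ≤ p5) :
    (1 - c / n) * lyapunovBound c A p2 p3 p5 n + (p2 / n ^ 2 + p3 / n ^ 3 + p5 / n ^ 5)
      ≤ lyapunovBound c A p2 p3 p5 (n + 1) := by
  have hcoeff {p : ℝ} (d : ℕ) (hd : (d : ℝ) < c) (hp : 0 ≤ p) :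
      p ≤ (c - d) * (4 * p / (c - d)) := by
    rw [mul_div_cancel₀ _ (sub_ne_zero.2 hd.ne')]; linarith
  have hA' := one_sub_div_mul_add_div_pow_succ_le (c := c) 2 hn hA
    (mul_nonneg (by norm_num; linarith) hA)
  have h2 := one_sub_div_mul_add_div_pow_succ_le 1 hn
    (div_nonneg (by positivity) (by norm_num; linarith)) (hcoeff 1 (by norm_num; linarith) hp2)
  have h3 := one_sub_div_mul_add_div_pow_succ_le 2 hn
    (div_nonneg (by positivity) (by norm_num; linarith)) (hcoeff 2 (by norm_num; linarith) hp3)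
  have h5 := one_sub_div_mul_add_div_pow_succ_le 4 hn
    (div_nonneg (by positivity) (by norm_num; linarith)) (hcoeff 4 (by norm_num; linarith) hp5)
  simp only [Nat.cast_ofNat, Nat.cast_one, pow_one, zero_div, div_div, Nat.reduceAdd] at hA' h2 h3 h5
  unfold lyapunovBound
  rw [mul_add, mul_add, mul_add]
  linarith

end lyapunovBound

/-- the key Lyapunov recursion bound. -/
theorem stmt_12 (M : ℕ → ℝ) (hMnn : ∀ k, 0 ≤ M k)
    (c m p2 p3 p5 : ℝ) (hc : 4 < c) (hm : c < m)
    (hp2 : 0 ≤ p2) (hp3 : 0 ≤ p3) (hp5 : 0 ≤ p5)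
    (hrec : ∀ k : ℕ, M (k + 1) ≤ (1 - c / ((k : ℝ) + m)) * M k
      + p2 / ((k : ℝ) + m) ^ 2 + p3 / ((k : ℝ) + m) ^ 3 + p5 / ((k : ℝ) + m) ^ 5) :
    ∀ k : ℕ, 1 ≤ k →
      M k ≤ m ^ 2 * M 0 / ((k : ℝ) + m) ^ 2
        + 4 * p2 / ((c - 1) * ((k : ℝ) + m))
        + 4 * p3 / ((c - 2) * ((k : ℝ) + m) ^ 2)
        + 4 * p5 / ((c - 4) * ((k : ℝ) + m) ^ 4) := by
  have hm0 : 0 < m := by linarith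
  have hn (k : ℕ) : c < (k : ℝ) + m := by linarith [(k.cast_nonneg : (0 : ℝ) ≤ k)]
  have hn0 (k : ℕ) : 0 < (k : ℝ) + m := by linarith [hn k]
  have hbound_zero := div_sq_le_lyapunovBound (A := m ^ 2 * M 0) hc hm0 hp2 hp3 hp5
  rw [mul_div_cancel_left₀ _ (pow_ne_zero 2 hm0.ne')] at hbound_zero
  have hbound := le_of_le_mul_add_of_mul_add_le
    (e := fun k : ℕ ↦ p2 / ((k : ℝ) + m) ^ 2 + p3 / ((k : ℝ) + m) ^ 3 + p5 / ((k : ℝ) + m) ^ 5)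
    (B := fun k : ℕ ↦ lyapunovBound c (m ^ 2 * M 0) p2 p3 p5 ((k : ℝ) + m))
    (fun k ↦ sub_nonneg.2 <| (div_le_one (hn0 k)).2 (hn k).le)
    (fun k ↦ (hrec k).trans_eq (by ring))
    (fun k ↦ by
      simpa only [Nat.cast_succ, add_right_comm _ (1 : ℝ) m] using
        lyapunovBound_step hc (hn0 k) (mul_nonneg (sq_nonneg m) (hMnn 0)) hp2 hp3 hp5)
    (by simpa only [Nat.cast_zero, zero_add] using hbound_zero)
  exact fun k _ ↦ hbound k
end

section
/- Let $q_0 \in (0,1)$, $m \ge 1$ a real number, $i \in \{2,3,4\}$, and $q_i \ge 0$. Define $A_i(k) = \sum_{t=0}^{k-1} q_0^{k-1-t} \frac{q_i}{(m+t)^i}$. If $(1 - \frac{1}{m+1})^i - q_0 > 0$, then for all $k \ge 0$, $A_i(k) \le \frac{q_i}{(k+m)^i \left[(1-\frac{1}{m+1})^i - q_0\right]}$. -/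
/-!
The sum satisfies `A(k+1) = q₀ A(k) + qᵢ/(m+k)^i`, so it suffices that the claimed bound
`B(k) = qᵢ / ((k+m)^i D)`, with `D = (1 - 1/(m+1))^i - q₀`, is a supersolution:
`q₀ B(k) + qᵢ/(k+m)^i ≤ B(k+1)`. Clearing denominators this is
`(1 - 1/(m+1))^i (k+m+1)^i ≤ (k+m)^i`, which holds because `x ↦ x/(x+1)` is increasing.
-/

open Finset

def geomConv {R : Type*} [CommSemiring R] (q : R) (b : ℕ → R) (k : ℕ) : R :=
  ∑ t ∈ range k, q ^ (k - 1 - t) * b t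

section GeomConv

variable {R : Type*} [CommSemiring R] (q : R) (b : ℕ → R)

@[simp]
theorem geomConv_zero : geomConv q b 0 = 0 := by
  simp [geomConv]

theorem geomConv_succ (k : ℕ) : geomConv q b (k + 1) = q * geomConv q b k + b k := by
  rw [geomConv, sum_range_succ, geomConv, mul_sum, Nat.add_sub_cancel, Nat.sub_self, pow_zero,
    one_mul]
  congr 1
  refine sum_congr rfl fun t ht => ?_
  rw [show k - t = k - 1 - t + 1 by have := mem_range.mp ht; omega, pow_succ']
  ring

variable {q b}

theorem geomConv_le_of_le_succ [PartialOrder R] [IsOrderedRing R] {B : ℕ → R}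
    (hq : 0 ≤ q) (hB₀ : 0 ≤ B 0) (hstep : ∀ k, q * B k + b k ≤ B (k + 1)) (k : ℕ) :
    geomConv q b k ≤ B k := by
  induction k with
  | zero => simpa using hB₀
  | succ k ih =>
    rw [geomConv_succ]
    exact (add_le_add_left (mul_le_mul_of_nonneg_left ih hq) _).trans (hstep k)

end GeomConv

theorem one_sub_one_div_add_one_mul_add_one_le {m x : ℝ} (hm : 0 < m + 1) (hmx : m ≤ x) :
    (1 - 1 / (m + 1)) * (x + 1) ≤ x := by
  have : 1 ≤ (x + 1) / (m + 1) := (one_le_div hm).mpr (by linarith)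
  have : (1 - 1 / (m + 1)) * (x + 1) = x + 1 - (x + 1) / (m + 1) := by ring
  linarith

theorem mul_div_pow_add_div_pow_le {q₀ qᵢ m x : ℝ} {i : ℕ} (hm : 0 < m) (hmx : m ≤ x)
    (hqᵢ : 0 ≤ qᵢ) (hD : 0 < (1 - 1 / (m + 1)) ^ i - q₀) :
    q₀ * (qᵢ / (x ^ i * ((1 - 1 / (m + 1)) ^ i - q₀))) + qᵢ / x ^ i ≤
      qᵢ / ((x + 1) ^ i * ((1 - 1 / (m + 1)) ^ i - q₀)) := by
  set c := 1 - 1 / (m + 1)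
  set D := c ^ i - q₀
  have hx : 0 < x := hm.trans_le hmx
  have hc : 0 ≤ c := by
    have : 1 / (m + 1) ≤ 1 := (div_le_one (by linarith)).mpr (by linarith)
    linarith
  have hpow : c ^ i * (x + 1) ^ i ≤ x ^ i := by
    rw [← mul_pow]
    exact pow_le_pow_left₀ (by positivity) (one_sub_one_div_add_one_mul_add_one_le (by linarith) hmx) i
  have hlhs : q₀ * (qᵢ / (x ^ i * D)) + qᵢ / x ^ i = qᵢ * c ^ i / (x ^ i * D) := by
    field_simp
    ring
  rw [hlhs, div_le_div_iff₀ (by positivity) (by positivity)]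
  have := mul_le_mul_of_nonneg_left hpow (mul_nonneg hqᵢ hD.le)
  linarith

theorem stmt_13_general (q0 m qi : ℝ) (i : ℕ) (hq0 : 0 < q0)
    (hm : 1 ≤ m) (hqi : 0 ≤ qi)
    (hpos : 0 < (1 - 1 / (m + 1)) ^ i - q0) :
    ∀ k : ℕ, (∑ t ∈ Finset.range k, q0 ^ (k - 1 - t) * (qi / (m + (t : ℝ)) ^ i)) ≤
      qi / (((k : ℝ) + m) ^ i * ((1 - 1 / (m + 1)) ^ i - q0)) := by
  have hm₀ : 0 < m := by linarith
  intro k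
  refine geomConv_le_of_le_succ (b := fun t : ℕ => qi / (m + (t : ℝ)) ^ i)
    (B := fun k : ℕ => qi / (((k : ℝ) + m) ^ i * ((1 - 1 / (m + 1)) ^ i - q0))) hq0.le
    (by simp only [Nat.cast_zero, zero_add]; positivity) (fun k => ?_) k
  rw [Nat.cast_succ, add_right_comm (k : ℝ) 1 m, add_comm m (k : ℝ)]
  exact mul_div_pow_add_div_pow_le hm₀ (le_add_of_nonneg_left k.cast_nonneg) hqi hpos

/-- bound on the geometric-decay convolution sum
`A_i(k) = ∑_{t=0}^{k-1} q₀^{k-1-t} qᵢ/(m+t)^i`. -/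
theorem stmt_13 (q0 m qi : ℝ) (i : ℕ) (hq0 : 0 < q0) (hq1 : q0 < 1)
    (hm : 1 ≤ m) (hi : i = 2 ∨ i = 3 ∨ i = 4) (hqi : 0 ≤ qi)
    (hpos : 0 < (1 - 1 / (m + 1)) ^ i - q0) :
    ∀ k : ℕ, (∑ t ∈ Finset.range k, q0 ^ (k - 1 - t) * (qi / (m + (t : ℝ)) ^ i)) ≤
      qi / (((k : ℝ) + m) ^ i * ((1 - 1 / (m + 1)) ^ i - q0)) :=
  stmt_13_general q0 m qi i hq0 hm hqi hpos
end

section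
/- Let $W$ be an $n \times n$ symmetric stochastic matrix with smallest eigenvalue $\lambda_n > 0$, let $V = (I_n-W)^{1/2}$, and let $B = \begin{pmatrix} W & -V \\ VW & W \end{pmatrix} \in \mathbb{R}^{2n\times 2n}$. Then $B$ is diagonalizable over $\mathbb{C}$; its eigenvalue $1$ has multiplicity $2$; every other eigenvalue has modulus $\sqrt{|\lambda_j(W)|} \le \sqrt{\lambda_2}$ where $\lambda_2$ is the second largest eigenvalue of $W$; and the spectral radius of $B$ equals $1$. -/
/-!
Diagonalise `V = Q diag(σ) Qᵀ` orthogonally. Then `W = 1 - V² = Q diag(λ) Qᵀ` with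
`λ = 1 - σ²`, so conjugating `B` by `diag(Q, Q)` splits it into `n` independent blocks
`[[λ, -σ], [σλ, λ]]`. Such a block has the eigenvectors `(1, ∓ i√λ)`, which are independent
because `λ > 0`, and the eigenvalues `λ ± iσ√λ`, of modulus `√(λ² + σ²λ) = √λ`; they equal `1`
exactly when `λ = 1`. Hence `B` is diagonalisable over `ℂ`, its spectrum is read off that of
`W`, and its eigenvalue `1` has twice the multiplicity that `1` has for `W`.
-/

open Matrix Polynomial Finset Complex Unitary

/-- `a + i s √a`; for `a ≥ 0` the eigenvalues of `[[a, -s], [s a, a]]` are `blockEigenvalue a s`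
and `blockEigenvalue a (-s)`. -/
noncomputable def blockEigenvalue (a s : ℝ) : ℂ := a + s * √a * I

theorem norm_blockEigenvalue {a s : ℝ} (ha : 0 ≤ a) (hs : s ^ 2 = 1 - a) :
    ‖blockEigenvalue a s‖ = √a := by
  rw [blockEigenvalue, ← ofReal_mul, norm_add_mul_I, mul_pow, Real.sq_sqrt ha, hs]
  ring_nf

theorem blockEigenvalue_eq_one_iff {a s : ℝ} (hs : s ^ 2 = 1 - a) :
    blockEigenvalue a s = 1 ↔ a = 1 := by
  refine ⟨fun h => by simpa [blockEigenvalue] using congrArg re h, fun h => ?_⟩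
  obtain rfl : s = 0 := by simpa [h] using hs
  simp [blockEigenvalue, h]

variable {ι : Type*}

noncomputable def blockEigenvalues (a s : ι → ℝ) : ι ⊕ ι → ℂ :=
  Sum.elim (fun i => blockEigenvalue (a i) (s i)) fun i => blockEigenvalue (a i) (-s i)

section BlockEigenvalues

variable {a s : ι → ℝ}

theorem blockEigenvalues_inl_eq_one_iff (hs : ∀ i, s i ^ 2 = 1 - a i) (i : ι) :
    blockEigenvalues a s (.inl i) = 1 ↔ a i = 1 :=
  blockEigenvalue_eq_one_iff (hs i)

theorem blockEigenvalues_inr_eq_one_iff (hs : ∀ i, s i ^ 2 = 1 - a i) (i : ι) :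
    blockEigenvalues a s (.inr i) = 1 ↔ a i = 1 :=
  blockEigenvalue_eq_one_iff (by rw [neg_sq, hs])

theorem exists_norm_blockEigenvalues_eq (hs : ∀ i, s i ^ 2 = 1 - a i) (ha : ∀ i, 0 ≤ a i)
    (x : ι ⊕ ι) :
    ∃ i, ‖blockEigenvalues a s x‖ = √(a i) ∧ (blockEigenvalues a s x = 1 ↔ a i = 1) := by
  rcases x with i | i
  · exact ⟨i, norm_blockEigenvalue (ha i) (hs i), blockEigenvalues_inl_eq_one_iff hs i⟩
  · exact ⟨i, norm_blockEigenvalue (ha i) (by rw [neg_sq, hs]),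
      blockEigenvalues_inr_eq_one_iff hs i⟩

theorem card_blockEigenvalues_eq_one [Fintype ι] (hs : ∀ i, s i ^ 2 = 1 - a i) :
    #{x | blockEigenvalues a s x = 1} = 2 * #{i | a i = 1} := by
  rw [card_filter, Fintype.sum_sum_type]
  simp only [blockEigenvalues_inl_eq_one_iff hs, blockEigenvalues_inr_eq_one_iff hs,
    ← card_filter]
  ring

end BlockEigenvalues

variable [Fintype ι]

theorem Matrix.fromBlocks_conj {R : Type*} [Semiring R] (Q Q' A B C D : Matrix ι ι R) :
    fromBlocks (Q * A * Q') (Q * B * Q') (Q * C * Q') (Q * D * Q') =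
      fromBlocks Q 0 0 Q * fromBlocks A B C D * fromBlocks Q' 0 0 Q' := by
  simp [fromBlocks_multiply]

variable [DecidableEq ι]

theorem Matrix.rootMultiplicity_charpoly_diagonal {R : Type*} [CommRing R] [IsDomain R]
    [DecidableEq R] (d : ι → R) (a : R) :
    (diagonal d).charpoly.rootMultiplicity a = #{i | d i = a} := by
  have h : ∏ i, (X - C (d i)) = ((univ.val.map d).map fun b => X - C b).prod := by
    rw [Multiset.map_map]; rfl
  rw [charpoly_diagonal, ← count_roots, h, roots_multiset_prod_X_sub_C, Multiset.count_map]
  simp [card, eq_comm]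

section NonsingInv

variable {R : Type*} [CommRing R] {A P D : Matrix ι ι R}

theorem Matrix.eq_mul_mul_nonsing_inv_of_mul_eq (hP : IsUnit P.det) (h : A * P = P * D) :
    A = P * D * P⁻¹ := by
  rw [← h, mul_nonsing_inv_cancel_right _ _ hP]

theorem Matrix.charpoly_conj_nonsing_inv (hP : IsUnit P.det) :
    (P * A * P⁻¹).charpoly = A.charpoly :=
  charpoly_units_conj (nonsingInvUnit P hP) A

theorem Matrix.spectrum_conj_nonsing_inv (hP : IsUnit P.det) :
    spectrum R (P * A * P⁻¹) = spectrum R A :=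
  spectrum.units_conjugate (u := nonsingInvUnit P hP)

end NonsingInv

theorem Matrix.charpoly_conjStarAlgAut {R : Type*} [CommRing R] [StarRing R]
    (u : unitary (Matrix ι ι R)) (A : Matrix ι ι R) :
    (conjStarAlgAut R _ u A).charpoly = A.charpoly := by
  rw [conjStarAlgAut_apply, charpoly_mul_comm, ← mul_assoc]
  simp

open scoped ComplexOrder in
theorem Matrix.PosDef.pos_of_mem_spectrum {𝕜 : Type*} [RCLike 𝕜] {A : Matrix ι ι 𝕜}
    (hA : A.PosDef) {l : ℝ} (hl : l ∈ spectrum ℝ A) : 0 < l := by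
  obtain ⟨j, rfl⟩ := hA.1.spectrum_real_eq_range_eigenvalues ▸ hl
  exact hA.eigenvalues_pos j

theorem Matrix.IsHermitian.eq_conjStarAlgAut_diagonal {V : Matrix ι ι ℝ} (hV : V.IsHermitian) :
    V = conjStarAlgAut ℝ _ hV.eigenvectorUnitary (diagonal hV.eigenvalues) := by
  simpa using hV.spectral_theorem

noncomputable def blockEigenvectors (a : ι → ℝ) : Matrix (ι ⊕ ι) (ι ⊕ ι) ℂ :=
  fromBlocks 1 1 (diagonal fun i => -I * √(a i)) (diagonal fun i => I * √(a i))

theorem isUnit_det_blockEigenvectors {a : ι → ℝ} (ha : ∀ i, 0 < a i) :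
    IsUnit (blockEigenvectors a).det := by
  rw [blockEigenvectors, det_fromBlocks_one₁₁, mul_one, diagonal_sub, det_diagonal]
  refine isUnit_iff_ne_zero.mpr (prod_ne_zero_iff.mpr fun i _ => ?_)
  have : (√(a i) : ℂ) ≠ 0 := ofReal_ne_zero.mpr (Real.sqrt_pos.mpr (ha i)).ne'
  rw [show I * √(a i) - -I * √(a i) = 2 * I * √(a i) by ring]
  exact mul_ne_zero (mul_ne_zero two_ne_zero I_ne_zero) this

theorem blockMatrix_mul_blockEigenvectors {a : ι → ℝ} (s : ι → ℝ) (ha : ∀ i, 0 ≤ a i) :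
    fromBlocks (diagonal fun i => (a i : ℂ)) (diagonal fun i => -(s i : ℂ))
        (diagonal fun i => (s i * a i : ℂ)) (diagonal fun i => (a i : ℂ)) * blockEigenvectors a =
      blockEigenvectors a * diagonal (blockEigenvalues a s) := by
  have hsq : ∀ i, (√(a i) : ℂ) * √(a i) = a i := fun i => by
    rw [← ofReal_mul, Real.mul_self_sqrt (ha i)]
  rw [blockEigenvectors, blockEigenvalues, ← fromBlocks_diagonal, fromBlocks_multiply,
    fromBlocks_multiply]
  simp only [diagonal_mul_diagonal, mul_one, one_mul, ← diagonal_one, diagonal_add,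
    Matrix.mul_zero, add_zero, zero_add, blockEigenvalue]
  congr 2 <;> funext i <;> push_cast <;>
    first | ring1 | linear_combination (s i * I ^ 2) * hsq i + (s i * a i) * I_sq

section SimultaneousDiagonalization

variable {u : unitary (Matrix ι ι ℝ)} {σ a : ι → ℝ} {V W : Matrix ι ι ℝ}

theorem eq_conjStarAlgAut_of_mul_self_eq_one_sub (hV : V = conjStarAlgAut ℝ _ u (diagonal σ))
    (hVW : V * V = 1 - W) : W = conjStarAlgAut ℝ _ u (diagonal fun i => 1 - σ i ^ 2) := by
  obtain rfl : W = 1 - V * V := by rw [hVW, sub_sub_cancel]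
  rw [hV, ← map_mul, ← map_one (conjStarAlgAut ℝ _ u), ← map_sub, diagonal_mul_diagonal,
    ← diagonal_one, diagonal_sub]
  simp only [sq]

theorem fromBlocks_eq_conj (hV : V = conjStarAlgAut ℝ _ u (diagonal σ))
    (hW : W = conjStarAlgAut ℝ _ u (diagonal a)) :
    fromBlocks W (-V) (V * W) W = fromBlocks (u : Matrix ι ι ℝ) 0 0 (u : Matrix ι ι ℝ) *
      fromBlocks (diagonal a) (diagonal fun i => -σ i) (diagonal fun i => σ i * a i) (diagonal a) *
      fromBlocks (star u : Matrix ι ι ℝ) 0 0 (star u : Matrix ι ι ℝ) := by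
  rw [hV, hW, ← map_neg, ← map_mul, ← diagonal_neg, diagonal_mul_diagonal]
  simp only [conjStarAlgAut_apply]
  exact fromBlocks_conj _ _ _ _ _ _

theorem exists_fromBlocks_map_eq_mul_diagonal_mul_inv
    (hV : V = conjStarAlgAut ℝ _ u (diagonal σ)) (hW : W = conjStarAlgAut ℝ _ u (diagonal a))
    (ha : ∀ i, 0 < a i) :
    ∃ P : Matrix (ι ⊕ ι) (ι ⊕ ι) ℂ, IsUnit P.det ∧
      (fromBlocks W (-V) (V * W) W).map (fun x => (x : ℂ)) =
        P * diagonal (blockEigenvalues a σ) * P⁻¹ := by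
  have hM : (fromBlocks (diagonal a) (diagonal fun i => -σ i) (diagonal fun i => σ i * a i)
      (diagonal a)).map ofRealHom = fromBlocks (diagonal fun i => (a i : ℂ))
        (diagonal fun i => -(σ i : ℂ)) (diagonal fun i => (σ i * a i : ℂ))
        (diagonal fun i => (a i : ℂ)) := by
    simp [fromBlocks_map, diagonal_map]
  rw [fromBlocks_eq_conj hV hW, show (fun x : ℝ => (x : ℂ)) = ofRealHom from rfl, Matrix.map_mul,
    Matrix.map_mul, hM]
  set U := (fromBlocks (u : Matrix ι ι ℝ) 0 0 (u : Matrix ι ι ℝ)).map ofRealHom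
  set U' := (fromBlocks (star u : Matrix ι ι ℝ) 0 0 (star u : Matrix ι ι ℝ)).map ofRealHom
  have hUU : U' * U = 1 := by
    rw [← Matrix.map_mul, fromBlocks_multiply]
    simp
  have hP : IsUnit (U * blockEigenvectors a).det := by
    rw [det_mul]
    exact (isUnit_det_of_left_inverse hUU).mul (isUnit_det_blockEigenvectors ha)
  refine ⟨U * blockEigenvectors a, hP, eq_mul_mul_nonsing_inv_of_mul_eq hP ?_⟩
  rw [Matrix.mul_assoc, Matrix.mul_assoc, ← Matrix.mul_assoc U' U, hUU, Matrix.one_mul,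
    blockMatrix_mul_blockEigenvectors σ fun i => (ha i).le, Matrix.mul_assoc]

end SimultaneousDiagonalization

theorem stmt_19_general {n : ℕ} (W V : Matrix (Fin n) (Fin n) ℝ) (lam2 : ℝ)
    (hWpos : W.PosDef)
    (hsimple : Polynomial.rootMultiplicity 1 (Matrix.charpoly W) = 1)
    (hsec : ∀ l ∈ spectrum ℝ W, l = 1 ∨ l ≤ lam2)
    (hVpsd : V.PosSemidef) (hV2 : V * V = 1 - W) :
    let B : Matrix (Fin n ⊕ Fin n) (Fin n ⊕ Fin n) ℝ := Matrix.fromBlocks W (-V) (V * W) W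
    let Bc : Matrix (Fin n ⊕ Fin n) (Fin n ⊕ Fin n) ℂ := B.map (fun a => (a : ℂ))
    (∃ P D : Matrix (Fin n ⊕ Fin n) (Fin n ⊕ Fin n) ℂ,
        IsUnit P.det ∧ D.IsDiag ∧ Bc = P * D * P⁻¹) ∧
    Polynomial.rootMultiplicity 1 (Matrix.charpoly Bc) = 2 ∧
    (∀ μ ∈ spectrum ℂ Bc, μ ≠ 1 →
        (∃ l ∈ spectrum ℝ W, ‖μ‖ = Real.sqrt |l|) ∧
        ‖μ‖ ≤ Real.sqrt lam2) ∧
    (1 : ℂ) ∈ spectrum ℂ Bc ∧ (∀ μ ∈ spectrum ℂ Bc, ‖μ‖ ≤ 1) := by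
  intro B Bc
  have hV := hVpsd.isHermitian.eq_conjStarAlgAut_diagonal
  set σ := hVpsd.isHermitian.eigenvalues
  have hW := eq_conjStarAlgAut_of_mul_self_eq_one_sub hV hV2
  set lam : Fin n → ℝ := fun i => 1 - σ i ^ 2
  have hσ (i : Fin n) : σ i ^ 2 = 1 - lam i := by ring
  have hspecW : spectrum ℝ W = Set.range lam := by
    rw [hW, AlgEquiv.spectrum_eq, spectrum_diagonal]
  have hlam_mem (i : Fin n) : lam i ∈ spectrum ℝ W := hspecW ▸ ⟨i, rfl⟩
  have hlam_pos (i : Fin n) : 0 < lam i := hWpos.pos_of_mem_spectrum (hlam_mem i)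
  have hcard : #{i | lam i = 1} = 1 := by
    rw [← rootMultiplicity_charpoly_diagonal, ← charpoly_conjStarAlgAut, ← hW, hsimple]
  obtain ⟨P, hP, hBc⟩ := exists_fromBlocks_map_eq_mul_diagonal_mul_inv hV hW hlam_pos
  replace hBc : Bc = P * diagonal (blockEigenvalues lam σ) * P⁻¹ := hBc
  have hmult : #{x | blockEigenvalues lam σ x = 1} = 2 := by
    rw [card_blockEigenvalues_eq_one hσ, hcard]
  have hspecBc : spectrum ℂ Bc = Set.range (blockEigenvalues lam σ) := by
    rw [hBc, spectrum_conj_nonsing_inv hP, spectrum_diagonal]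
  have hnorm := exists_norm_blockEigenvalues_eq hσ fun i => (hlam_pos i).le
  refine ⟨⟨P, _, hP, isDiag_diagonal _, hBc⟩, ?_, ?_, ?_, ?_⟩
  · rw [hBc, charpoly_conj_nonsing_inv hP, rootMultiplicity_charpoly_diagonal, hmult]
  · rw [hspecBc]
    rintro _ ⟨x, rfl⟩ hx1
    obtain ⟨i, hxi, hi1⟩ := hnorm x
    have hle := (hsec _ (hlam_mem i)).resolve_left (mt hi1.mpr hx1)
    exact ⟨⟨lam i, hlam_mem i, by rw [hxi, abs_of_pos (hlam_pos i)]⟩,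
      hxi ▸ Real.sqrt_le_sqrt hle⟩
  · obtain ⟨x, hx⟩ := card_pos.mp (hmult ▸ two_pos : 0 < #{x | blockEigenvalues lam σ x = 1})
    exact hspecBc ▸ ⟨x, (mem_filter.mp hx).2⟩
  · rw [hspecBc]
    rintro _ ⟨x, rfl⟩
    obtain ⟨i, hxi, -⟩ := hnorm x
    exact hxi ▸ Real.sqrt_le_one.mpr (sub_le_self _ (sq_nonneg _))

/-- for `W` symmetric stochastic with positive eigenvalues, simple
eigenvalue `1`, second largest eigenvalue `λ₂ < 1`, and `V = (I-W)^{1/2}`, the block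
matrix `B = [[W, -V], [VW, W]]` is diagonalizable over `ℂ`, its eigenvalue `1` has
multiplicity `2`, every other eigenvalue has modulus `√|λⱼ(W)| ≤ √λ₂`, and the spectral
radius of `B` equals `1`. -/
theorem stmt_19 {n : ℕ} (W V : Matrix (Fin n) (Fin n) ℝ) (lam2 : ℝ)
    (hWsymm : W.IsSymm) (hWnonneg : ∀ i j, 0 ≤ W i j)
    (hWrow : ∀ i, ∑ j, W i j = 1)
    (hWpos : W.PosDef)
    (hsimple : Polynomial.rootMultiplicity 1 (Matrix.charpoly W) = 1)
    (hsec : ∀ l ∈ spectrum ℝ W, l = 1 ∨ l ≤ lam2)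
    (hlam2nn : 0 ≤ lam2) (hlam2lt : lam2 < 1)
    (hVpsd : V.PosSemidef) (hV2 : V * V = 1 - W) :
    let B : Matrix (Fin n ⊕ Fin n) (Fin n ⊕ Fin n) ℝ := Matrix.fromBlocks W (-V) (V * W) W
    let Bc : Matrix (Fin n ⊕ Fin n) (Fin n ⊕ Fin n) ℂ := B.map (fun a => (a : ℂ))
    (∃ P D : Matrix (Fin n ⊕ Fin n) (Fin n ⊕ Fin n) ℂ,
        IsUnit P.det ∧ D.IsDiag ∧ Bc = P * D * P⁻¹) ∧
    Polynomial.rootMultiplicity 1 (Matrix.charpoly Bc) = 2 ∧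
    (∀ μ ∈ spectrum ℂ Bc, μ ≠ 1 →
        (∃ l ∈ spectrum ℝ W, ‖μ‖ = Real.sqrt |l|) ∧
        ‖μ‖ ≤ Real.sqrt lam2) ∧
    (1 : ℂ) ∈ spectrum ℂ Bc ∧ (∀ μ ∈ spectrum ℂ Bc, ‖μ‖ ≤ 1) :=
  stmt_19_general W V lam2 hWpos hsimple hsec hVpsd hV2
end
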